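/- arXiv:1702.05880 — 2 statements merged into one kernel-verified Lean document; each statement's English description precedes it below -/
import Mathlib

section
/- Fix λC > 0, λI > 0, n ≥ 1 a natural number, and T > 0. Define V(s) = Σ_{l=1}^{n} C(n,l) · (λC)^{n-l} (λI)^l / (s·l·(λC+λI)) · [T - 1/(s·l·(λC+λI)) + e^{-s·l·(λC+λI)·T}/(s·l·(λC+λI))] for s > 0 (omitting the positive constant prefactor). Then V is strictly decreasing in s on (0, ∞). -/
/-!
With `x = s l (λC + λI)`, the `l`-th summand of `V` is `c_l T² φ(x T)` for a positive constant `c_l`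
and `φ(u) = (u - 1 + e^{-u}) / u²`. Its derivative is `(2 (1 - e^{-u}) - u (1 + e^{-u})) / u³`,
which is negative for `u > 0` because `tanh (u / 2) < u / 2`. So every summand is strictly
decreasing in `s`, and `n ≥ 1` makes the sum nonempty.
-/

open Real Set

/-- The variance of the communication time (up to a positive constant prefactor),
as a function of the speed scaling factor `s`. -/
noncomputable def V (lC lI T : ℝ) (n : ℕ) (s : ℝ) : ℝ :=
  ∑ l ∈ Finset.Icc 1 n,
    (n.choose l : ℝ) * lC ^ (n - l) * lI ^ l / (s * l * (lC + lI)) *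
      (T - 1 / (s * l * (lC + lI)) +
        Real.exp (-(s * l * (lC + lI) * T)) / (s * l * (lC + lI)))

lemma two_mul_one_sub_exp_neg_lt (u : ℝ) (hu : 0 < u) :
    2 * (1 - exp (-u)) < u * (1 + exp (-u)) := by
  let g : ℝ → ℝ := fun x ↦ x * (1 + exp (-x)) - 2 * (1 - exp (-x))
  have hg : ∀ x, HasDerivAt g (exp (-x) * (exp x - 1 - x)) x := by
    intro x
    have he : HasDerivAt (fun x : ℝ ↦ exp (-x)) (-exp (-x)) x := by
      simpa using (hasDerivAt_neg x).exp
    refine (((hasDerivAt_id x).mul ((hasDerivAt_const x 1).add he)).sub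
      (((hasDerivAt_const x 1).sub he).const_mul 2)).congr_deriv ?_
    have hinv : exp (-x) * exp x = 1 := by rw [← exp_add, neg_add_cancel, exp_zero]
    simp only [Pi.add_apply, id]
    linear_combination -hinv
  have hmono : StrictMonoOn g (Ici 0) := by
    refine strictMonoOn_of_deriv_pos (convex_Ici 0)
      (fun x _ ↦ (hg x).continuousAt.continuousWithinAt) fun x hx ↦ ?_
    rw [interior_Ici] at hx
    rw [(hg x).deriv]
    have := add_one_lt_exp (ne_of_gt hx)
    exact mul_pos (exp_pos _) (by linarith)
  have := hmono self_mem_Ici hu.le hu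
  simp only [g, neg_zero, exp_zero] at this
  linarith

/-- Equal to `∫₀¹ (1 - t) e^{-u t} dt`. -/
noncomputable def expRemainderDivSq (u : ℝ) : ℝ :=
  (u - 1 + exp (-u)) / u ^ 2

lemma hasDerivAt_expRemainderDivSq {u : ℝ} (hu : u ≠ 0) :
    HasDerivAt expRemainderDivSq ((2 * (1 - exp (-u)) - u * (1 + exp (-u))) / u ^ 3) u := by
  have he : HasDerivAt (fun x : ℝ ↦ exp (-x)) (-exp (-u)) u := by
    simpa using (hasDerivAt_neg u).exp
  refine ((((hasDerivAt_id u).sub_const 1).add he).div (hasDerivAt_pow 2 u)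
    (pow_ne_zero 2 hu)).congr_deriv ?_
  simp only [Pi.add_apply, id]
  field_simp
  ring

lemma expRemainderDivSq_strictAntiOn : StrictAntiOn expRemainderDivSq (Ioi 0) := by
  refine strictAntiOn_of_deriv_neg (convex_Ioi 0)
    (fun u hu ↦ (hasDerivAt_expRemainderDivSq (ne_of_gt hu)).continuousAt.continuousWithinAt)
    fun u hu ↦ ?_
  rw [interior_Ioi] at hu
  rw [(hasDerivAt_expRemainderDivSq (ne_of_gt hu)).deriv]
  have := two_mul_one_sub_exp_neg_lt u hu
  exact div_neg_of_neg_of_pos (by linarith) (pow_pos hu 3)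

lemma div_mul_sub_add_exp_eq (c T : ℝ) {x : ℝ} (hx : x ≠ 0) (hT : T ≠ 0) :
    c / x * (T - 1 / x + exp (-(x * T)) / x) = c * T ^ 2 * expRemainderDivSq (x * T) := by
  unfold expRemainderDivSq
  field_simp

lemma strictAntiOn_div_mul_sub_add_exp {c T : ℝ} (hc : 0 < c) (hT : 0 < T) :
    StrictAntiOn (fun x ↦ c / x * (T - 1 / x + exp (-(x * T)) / x)) (Ioi 0) := by
  intro a (ha : 0 < a) b (hb : 0 < b) hab
  simp only [div_mul_sub_add_exp_eq c T ha.ne' hT.ne', div_mul_sub_add_exp_eq c T hb.ne' hT.ne']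
  have hφ := expRemainderDivSq_strictAntiOn (mul_pos ha hT) (mul_pos hb hT)
    (mul_lt_mul_of_pos_right hab hT)
  exact mul_lt_mul_of_pos_left hφ (by positivity)

theorem variance_strictAnti (lC lI T : ℝ) (n : ℕ)
    (hC : 0 < lC) (hI : 0 < lI) (hn : 1 ≤ n) (hT : 0 < T) :
    StrictAntiOn (V lC lI T n) (Set.Ioi 0) := by
  intro a (ha : 0 < a) b (hb : 0 < b) hab
  refine Finset.sum_lt_sum_of_nonempty ⟨1, Finset.mem_Icc.mpr ⟨le_rfl, hn⟩⟩ fun l hl ↦ ?_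
  obtain ⟨hl, hln⟩ := Finset.mem_Icc.mp hl
  have hk : 0 < (l : ℝ) * (lC + lI) := by
    have : (0 : ℝ) < l := by exact_mod_cast hl
    positivity
  have hc : 0 < (n.choose l : ℝ) * lC ^ (n - l) * lI ^ l := by
    have := Nat.choose_pos hln
    positivity
  simp only [mul_assoc _ (l : ℝ)]
  exact strictAntiOn_div_mul_sub_add_exp hc hT (mul_pos ha hk) (mul_pos hb hk)
    (mul_lt_mul_of_pos_right hab hk)
end

section
/- For α > 0, y > 0, and r ∈ (0,1], define g(α) = (1/B(α, yα)) · ∫₀^r (1 - u/r) · u^{α-1} (1-u)^{yα-1} du, where B is the beta function. Then g is nonincreasing in α, and strictly decreasing when r ∈ (0,1). -/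
/-- The Euler beta function `B(a,b) = ∫₀¹ u^(a-1)(1-u)^(b-1) du`. -/
noncomputable def betaFn (a b : ℝ) : ℝ :=
  ∫ u in (0:ℝ)..1, u ^ (a - 1) * (1 - u) ^ (b - 1)

/-- One minus the data offloading ratio, as a function of the beta shape parameter α. -/
noncomputable def g (y r α : ℝ) : ℝ :=
  (1 / betaFn α (y * α)) *
    ∫ u in (0:ℝ)..r, (1 - u / r) * u ^ (α - 1) * (1 - u) ^ (y * α - 1)


open MeasureTheory Set intervalIntegral


lemma betaFn_ofReal (a b : ℝ) :
    (betaFn a b : ℂ) = Complex.betaIntegral a b := by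
  rw [betaFn, ← intervalIntegral.integral_ofReal, Complex.betaIntegral]
  refine intervalIntegral.integral_congr fun u hu => ?_
  rw [Set.uIcc_of_le (by norm_num : (0:ℝ) ≤ 1)] at hu
  push_cast
  rw [Complex.ofReal_cpow hu.1, Complex.ofReal_cpow (by linarith [hu.2])]
  push_cast
  ring

lemma betaFn_eq_Gamma {a b : ℝ} (ha : 0 < a) (hb : 0 < b) :
    betaFn a b = Real.Gamma a * Real.Gamma b / Real.Gamma (a + b) := by
  have h := Complex.Gamma_mul_Gamma_eq_betaIntegral
    (s := (a:ℂ)) (t := (b:ℂ)) (by simpa using ha) (by simpa using hb)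
  have hne : Real.Gamma (a + b) ≠ 0 := (Real.Gamma_pos_of_pos (by linarith)).ne'
  rw [← Complex.ofReal_inj, betaFn_ofReal]
  have : ((a:ℂ) + b) = ((a + b : ℝ) : ℂ) := by push_cast; ring
  rw [this, Complex.Gamma_ofReal, Complex.Gamma_ofReal, Complex.Gamma_ofReal] at h
  have h2 : Complex.betaIntegral a b =
      (Real.Gamma a : ℂ) * Real.Gamma b / Real.Gamma (a + b) := by
    rw [eq_div_iff (by exact_mod_cast hne), mul_comm _ ((Real.Gamma (a+b) : ℂ)), ← h]
  rw [h2]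
  push_cast
  ring

lemma betaFn_pos {a b : ℝ} (ha : 0 < a) (hb : 0 < b) : 0 < betaFn a b := by
  rw [betaFn_eq_Gamma ha hb]
  have := Real.Gamma_pos_of_pos ha
  have := Real.Gamma_pos_of_pos hb
  have := Real.Gamma_pos_of_pos (show 0 < a + b by linarith)
  positivity

lemma betaFn_succ {a b : ℝ} (ha : 0 < a) (hb : 0 < b) :
    betaFn (a + 1) b = (a / (a + b)) * betaFn a b := by
  rw [betaFn_eq_Gamma (by linarith) hb, betaFn_eq_Gamma ha hb,
    Real.Gamma_add_one ha.ne', show a + 1 + b = (a + b) + 1 by ring,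
    Real.Gamma_add_one (by positivity)]
  have h1 : Real.Gamma (a + b) ≠ 0 := (Real.Gamma_pos_of_pos (by linarith)).ne'
  have h2 : a + b ≠ 0 := by positivity
  field_simp

lemma betaKernel_intervalIntegrable {a b : ℝ} (ha : 0 < a) (hb : 0 < b) :
    IntervalIntegrable (fun u : ℝ => u ^ (a-1) * (1-u) ^ (b-1)) volume 0 1 := by
  have hc := Complex.betaIntegral_convergent (u := (a:ℂ)) (v := (b:ℂ))
    (by simpa using ha) (by simpa using hb)
  rw [intervalIntegrable_iff_integrableOn_Ioc_of_le (by norm_num)] at hc ⊢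
  refine IntegrableOn.congr_fun hc.re ?_ measurableSet_Ioc
  intro u hu
  have hu0 : (0:ℝ) ≤ u := le_of_lt hu.1
  have hu1 : (0:ℝ) ≤ 1 - u := by linarith [hu.2]
  have : ((u:ℂ) ^ ((a:ℂ)-1) * ((1:ℂ)-u) ^ ((b:ℂ)-1)) =
      ((u ^ (a-1) * (1-u) ^ (b-1) : ℝ) : ℂ) := by
    push_cast
    rw [Complex.ofReal_cpow hu0, Complex.ofReal_cpow hu1]
    push_cast; ring
  simp only [this, RCLike.re_to_complex, Complex.ofReal_re]

/-- nonpositive a.e. on the open interval gives nonpositive integral -/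
lemma integral_nonpos_of_Ioo {f : ℝ → ℝ} {a b : ℝ} (hab : a ≤ b)
    (hle : ∀ u ∈ Set.Ioo a b, f u ≤ 0) : (∫ u in a..b, f u) ≤ 0 := by
  have h : (0:ℝ) ≤ ∫ u in a..b, -f u := by
    refine intervalIntegral.integral_nonneg_of_ae_restrict hab ?_
    have h0 : ∀ᵐ u ∂(volume.restrict (Set.Ioo a b)), 0 ≤ -f u := by
      rw [ae_restrict_iff' measurableSet_Ioo]
      filter_upwards with u hu using neg_nonneg.mpr (hle u hu)
    have heq : (volume.restrict (Set.Icc a b)) = volume.restrict (Set.Ioo a b) := by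
      refine Measure.restrict_congr_set Ioo_ae_eq_Icc.symm
    rw [heq]; exact h0
  rw [intervalIntegral.integral_neg] at h
  linarith

lemma integral_neg_of_Ioo {f : ℝ → ℝ} {c d : ℝ}
    (hf : IntervalIntegrable f volume 0 1)
    (hle : ∀ u ∈ Set.Ioo (0:ℝ) 1, f u ≤ 0)
    (hc : 0 ≤ c) (hcd : c < d) (hd : d ≤ 1)
    (hlt : ∀ u ∈ Set.Ioo c d, f u < 0) : (∫ u in (0:ℝ)..1, f u) < 0 := by
  have h1 : IntervalIntegrable f volume 0 c := by
    refine hf.mono_set ?_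
    rw [Set.uIcc_of_le hc, Set.uIcc_of_le (by norm_num)]
    exact Set.Icc_subset_Icc le_rfl (by linarith)
  have h2 : IntervalIntegrable f volume c d := by
    refine hf.mono_set ?_
    rw [Set.uIcc_of_le hcd.le, Set.uIcc_of_le (by norm_num)]
    exact Set.Icc_subset_Icc hc (by linarith)
  have h3 : IntervalIntegrable f volume d 1 := by
    refine hf.mono_set ?_
    rw [Set.uIcc_of_le hd, Set.uIcc_of_le (by norm_num)]
    exact Set.Icc_subset_Icc (by linarith) le_rfl
  have e1 : (∫ u in (0:ℝ)..c, f u) ≤ 0 := integral_nonpos_of_Ioo hc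
    (fun u hu => hle u ⟨hu.1, lt_of_lt_of_le hu.2 (by linarith)⟩)
  have e3 : (∫ u in d..(1:ℝ), f u) ≤ 0 := integral_nonpos_of_Ioo hd
    (fun u hu => hle u ⟨lt_of_le_of_lt (by linarith : (0:ℝ) ≤ d) hu.1, hu.2⟩)
  have e2 : (∫ u in c..d, f u) < 0 := by
    have := intervalIntegral_pos_of_pos_on (f := fun u => -f u) h2.neg
      (fun u hu => neg_pos.mpr (hlt u hu)) hcd
    rw [intervalIntegral.integral_neg] at this
    linarith
  have s1 : (∫ u in (0:ℝ)..d, f u) = (∫ u in (0:ℝ)..c, f u) + ∫ u in c..d, f u :=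
    (intervalIntegral.integral_add_adjacent_intervals h1 h2).symm
  have s2 : (∫ u in (0:ℝ)..1, f u) = (∫ u in (0:ℝ)..d, f u) + ∫ u in d..1, f u :=
    (intervalIntegral.integral_add_adjacent_intervals (h1.trans h2) h3).symm
  rw [s2, s1]
  linarith

noncomputable def hfun (y u : ℝ) : ℝ := u * (1 - u) ^ y

variable {y : ℝ}

lemma hfun_cont (hy : 0 < y) : Continuous (hfun y) := by
  refine continuous_id.mul ?_
  refine continuous_iff_continuousAt.mpr fun u => ?_
  refine (Real.continuousAt_rpow_const (1 - u) y ?_).comp (by fun_prop)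
  rcases eq_or_ne (1 - u) 0 with h | h
  · exact Or.inr hy.le
  · exact Or.inl h

lemma hfun_hasDerivAt (hy : 0 < y) {u : ℝ} (hu : u < 1) :
    HasDerivAt (hfun y) ((1 - u) ^ (y - 1) * (1 - u * (1 + y))) u := by
  have h1 : HasDerivAt (fun v : ℝ => 1 - v) (-1) u := by
    simpa using (hasDerivAt_id u).const_sub 1
  have h2 : HasDerivAt (fun v : ℝ => (1 - v) ^ y) (y * (1 - u) ^ (y - 1) * (-1)) u := by
    exact (Real.hasDerivAt_rpow_const (Or.inl (by linarith : (1:ℝ) - u ≠ 0))).comp u h1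
  have h3 := (hasDerivAt_id u).mul h2
  have key : 1 * (1 - u) ^ y + u * (y * (1 - u) ^ (y - 1) * (-1)) =
      (1 - u) ^ (y - 1) * (1 - u * (1 + y)) := by
    have : (1 - u) ^ y = (1 - u) ^ (y - 1) * (1 - u) := by
      rw [← Real.rpow_add_one (by linarith : (1:ℝ) - u ≠ 0)]
      ring_nf
    rw [this]; ring
  simp only [id] at h3
  rw [key] at h3
  unfold hfun
  exact h3

lemma hfun_strictMonoOn (hy : 0 < y) : StrictMonoOn (hfun y) (Icc 0 (1 / (1 + y))) := by
  have hm1 : (1:ℝ) / (1 + y) < 1 := by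
    rw [div_lt_one (by linarith)]; linarith
  refine strictMonoOn_of_deriv_pos (convex_Icc _ _) (hfun_cont hy).continuousOn ?_
  intro u hu
  rw [interior_Icc] at hu
  have hu1 : u < 1 := lt_trans hu.2 hm1
  rw [(hfun_hasDerivAt hy hu1).deriv]
  have h1 : (0:ℝ) < (1 - u) ^ (y - 1) := Real.rpow_pos_of_pos (by linarith) _
  have h2 : 0 < 1 - u * (1 + y) := by
    have := hu.2
    rw [lt_div_iff₀ (by linarith : (0:ℝ) < 1 + y)] at this
    linarith
  positivity

lemma hfun_strictAntiOn (hy : 0 < y) : StrictAntiOn (hfun y) (Icc (1 / (1 + y)) 1) := by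
  refine strictAntiOn_of_deriv_neg (convex_Icc _ _) (hfun_cont hy).continuousOn ?_
  intro u hu
  rw [interior_Icc] at hu
  rw [(hfun_hasDerivAt hy hu.2).deriv]
  have h1 : (0:ℝ) < (1 - u) ^ (y - 1) := Real.rpow_pos_of_pos (by linarith [hu.2]) _
  have h2 : 1 - u * (1 + y) < 0 := by
    have := hu.1
    rw [div_lt_iff₀ (by linarith : (0:ℝ) < 1 + y)] at this
    linarith
  nlinarith

lemma hfun_zero (hy : 0 < y) : hfun y 0 = 0 := by simp [hfun]

lemma hfun_one (hy : 0 < y) : hfun y 1 = 0 := by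
  simp [hfun, Real.zero_rpow hy.ne']

lemma hfun_pos (hy : 0 < y) {u : ℝ} (hu : u ∈ Ioo (0:ℝ) 1) : 0 < hfun y u := by
  have := Real.rpow_pos_of_pos (by linarith [hu.2] : (0:ℝ) < 1 - u) y
  have := hu.1
  unfold hfun; positivity


noncomputable def wker (y α u : ℝ) : ℝ := u ^ (α - 1) * (1 - u) ^ (y * α - 1)

noncomputable def phi (r u : ℝ) : ℝ := max (1 - u / r) 0

lemma chord_ineq {r x z v : ℝ} (hr : 0 < r) (hxv : x < v) (hvz : v < z) :
    phi r v * (z - x) ≤ phi r x * (z - v) + phi r z * (v - x) := by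
  unfold phi
  rcases le_or_gt (1 - v / r) 0 with h | h
  · rw [max_eq_right h]
    have h1 : (0:ℝ) ≤ max (1 - x / r) 0 := le_max_right _ _
    have h2 : (0:ℝ) ≤ max (1 - z / r) 0 := le_max_right _ _
    nlinarith
  · rw [max_eq_left h.le]
    have e : (1 - v/r) * (z - x) = (1 - x/r) * (z - v) + (1 - z/r) * (v - x) := by
      field_simp
      ring
    have h1 := mul_le_mul_of_nonneg_right (le_max_left (1 - x/r) 0)
      (by linarith : (0:ℝ) ≤ z - v)
    have h2 := mul_le_mul_of_nonneg_right (le_max_left (1 - z/r) 0)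
      (by linarith : (0:ℝ) ≤ v - x)
    linarith

lemma phi_continuous {r : ℝ} (hr : 0 < r) : Continuous (phi r) :=
  (continuous_const.sub (continuous_id.div_const r)).max continuous_const
variable {y r : ℝ}

lemma wker_integrable (hy : 0 < y) {α : ℝ} (hα : 0 < α) :
    IntervalIntegrable (wker y α) volume 0 1 :=
  betaKernel_intervalIntegrable hα (by positivity)

lemma integral_wker : (∫ u in (0:ℝ)..1, wker y α u) = betaFn α (y * α) := rfl

lemma integral_mul_wker (hy : 0 < y) {α : ℝ} (hα : 0 < α) :
    (∫ u in (0:ℝ)..1, u * wker y α u) = betaFn α (y * α) / (1 + y) := by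
  have h1 : (∫ u in (0:ℝ)..1, u * wker y α u) = betaFn (α + 1) (y * α) := by
    rw [betaFn]
    refine intervalIntegral.integral_congr fun u hu => ?_
    rw [Set.uIcc_of_le (by norm_num : (0:ℝ) ≤ 1)] at hu
    rcases eq_or_lt_of_le hu.1 with h0 | h0
    · rw [wker, ← h0]
      rw [Real.zero_rpow (by linarith : α + 1 - 1 ≠ 0)]
      simp
    · rw [wker, show α + 1 - 1 = 1 + (α - 1) by ring, Real.rpow_add h0, Real.rpow_one]
      ring
  rw [h1, betaFn_succ hα (by positivity)]
  have : α + y * α = α * (1 + y) := by ring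
  rw [this]
  have hα' : α ≠ 0 := hα.ne'
  have hy' : (1:ℝ) + y ≠ 0 := by positivity
  field_simp

lemma phi_integral (hy : 0 < y) (hr0 : 0 < r) (hr1 : r ≤ 1) {α : ℝ} (hα : 0 < α) :
    (∫ u in (0:ℝ)..r, (1 - u / r) * u ^ (α - 1) * (1 - u) ^ (y * α - 1)) =
      ∫ u in (0:ℝ)..1, phi r u * wker y α u := by
  have hint : IntervalIntegrable (fun u => phi r u * wker y α u) volume 0 1 :=
    (wker_integrable hy hα).continuousOn_mul (phi_continuous hr0).continuousOn
  have hi1 : IntervalIntegrable (fun u => phi r u * wker y α u) volume 0 r := by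
    refine hint.mono_set ?_
    rw [Set.uIcc_of_le hr0.le, Set.uIcc_of_le (by norm_num)]
    exact Set.Icc_subset_Icc le_rfl hr1
  have hi2 : IntervalIntegrable (fun u => phi r u * wker y α u) volume r 1 := by
    refine hint.mono_set ?_
    rw [Set.uIcc_of_le hr1, Set.uIcc_of_le (by norm_num)]
    exact Set.Icc_subset_Icc hr0.le le_rfl
  have h2 : (∫ u in r..(1:ℝ), phi r u * wker y α u) = 0 := by
    rw [show (0:ℝ) = ∫ u in r..(1:ℝ), (0:ℝ) by simp]
    refine intervalIntegral.integral_congr fun u hu => ?_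
    rw [Set.uIcc_of_le hr1] at hu
    have : 1 - u / r ≤ 0 := by
      have : (1:ℝ) ≤ u / r := (one_le_div hr0).mpr hu.1
      linarith
    rw [phi, max_eq_right this, zero_mul]
  have h3 : (∫ u in (0:ℝ)..r, (1 - u / r) * u ^ (α - 1) * (1 - u) ^ (y * α - 1)) =
      ∫ u in (0:ℝ)..r, phi r u * wker y α u := by
    refine intervalIntegral.integral_congr fun u hu => ?_
    rw [Set.uIcc_of_le hr0.le] at hu
    have : 0 ≤ 1 - u / r := by
      have : u / r ≤ 1 := div_le_one_of_le₀ hu.2 hr0.le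
      linarith
    rw [phi, max_eq_left this, wker]
    ring
  rw [h3, ← intervalIntegral.integral_add_adjacent_intervals hi1 hi2, h2, add_zero]

set_option maxHeartbeats 1000000 in
lemma key_ineq (hy : 0 < y) (hr0 : 0 < r) (hr1 : r ≤ 1) {a b : ℝ}
    (ha : 0 < a) (hab : a < b) :
    betaFn a (y * a) *
        (∫ u in (0:ℝ)..r, (1 - u / r) * u ^ (b - 1) * (1 - u) ^ (y * b - 1)) ≤
      betaFn b (y * b) *
        (∫ u in (0:ℝ)..r, (1 - u / r) * u ^ (a - 1) * (1 - u) ^ (y * a - 1)) ∧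
    (r < 1 →
      betaFn a (y * a) *
          (∫ u in (0:ℝ)..r, (1 - u / r) * u ^ (b - 1) * (1 - u) ^ (y * b - 1)) <
        betaFn b (y * b) *
          (∫ u in (0:ℝ)..r, (1 - u / r) * u ^ (a - 1) * (1 - u) ^ (y * a - 1))) := by
  have hb : 0 < b := ha.trans hab
  set Ba := betaFn a (y * a) with hBa_def
  set Bb := betaFn b (y * b) with hBb_def
  have hBa : 0 < Ba := betaFn_pos ha (by positivity)
  have hBb : 0 < Bb := betaFn_pos hb (by positivity)
  set m : ℝ := 1 / (1 + y) with hm_def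
  have hm0 : 0 < m := by positivity
  have hm1 : m < 1 := by
    rw [hm_def, div_lt_one (by linarith)]; linarith
  set p : ℝ := b - a with hp_def
  have hp : 0 < p := by simp [hp_def]; linarith
  set t : ℝ := (Bb / Ba) ^ p⁻¹ with ht_def
  have ht : 0 < t := Real.rpow_pos_of_pos (by positivity) _
  have htpow : t ^ p = Bb / Ba := by
    rw [ht_def, ← Real.rpow_mul (by positivity : (0:ℝ) ≤ Bb / Ba),
      inv_mul_cancel₀ hp.ne', Real.rpow_one]
  have hsm : StrictMonoOn (hfun y) (Icc 0 m) := by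
    rw [hm_def]; exact hfun_strictMonoOn hy
  have hsa : StrictAntiOn (hfun y) (Icc m 1) := by
    rw [hm_def]; exact hfun_strictAntiOn hy
  -- the density difference
  set D : ℝ → ℝ := fun u => Ba * wker y b u - Bb * wker y a u with hD_def
  have hDi : IntervalIntegrable D volume 0 1 :=
    ((wker_integrable hy hb).const_mul Ba).sub ((wker_integrable hy ha).const_mul Bb)
  have hintD : (∫ u in (0:ℝ)..1, D u) = 0 := by
    rw [hD_def]
    rw [intervalIntegral.integral_sub ((wker_integrable hy hb).const_mul Ba)
      ((wker_integrable hy ha).const_mul Bb),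
      intervalIntegral.integral_const_mul, intervalIntegral.integral_const_mul,
      integral_wker, integral_wker]
    ring
  have hintuD : (∫ u in (0:ℝ)..1, u * D u) = 0 := by
    have e : (fun u : ℝ => u * D u) =
        fun u => Ba * (u * wker y b u) - Bb * (u * wker y a u) := by
      funext u; rw [hD_def]; ring
    have ib : IntervalIntegrable (fun u : ℝ => u * wker y b u) volume 0 1 :=
      (wker_integrable hy hb).continuousOn_mul continuousOn_id
    have ia : IntervalIntegrable (fun u : ℝ => u * wker y a u) volume 0 1 :=
      (wker_integrable hy ha).continuousOn_mul continuousOn_id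
    rw [e, intervalIntegral.integral_sub (ib.const_mul Ba) (ia.const_mul Bb),
      intervalIntegral.integral_const_mul, intervalIntegral.integral_const_mul,
      integral_mul_wker hy hb, integral_mul_wker hy ha]
    ring
  -- pointwise structure
  have hW : ∀ u ∈ Ioo (0:ℝ) 1, wker y b u = wker y a u * (hfun y u) ^ p := by
    intro u hu
    have hu0 : (0:ℝ) < u := hu.1
    have hu1 : (0:ℝ) < 1 - u := by linarith [hu.2]
    have e1 : (hfun y u) ^ p = u ^ p * (1 - u) ^ (y * p) := by
      rw [hfun, Real.mul_rpow hu0.le (Real.rpow_nonneg hu1.le y),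
        ← Real.rpow_mul hu1.le]
    rw [wker, wker, e1, mul_mul_mul_comm, ← Real.rpow_add hu0, ← Real.rpow_add hu1]
    rw [hp_def]
    ring_nf
  have hsign_lt : ∀ u ∈ Ioo (0:ℝ) 1, hfun y u < t → D u < 0 := by
    intro u hu hlt
    have hwa : 0 < wker y a u :=
      mul_pos (Real.rpow_pos_of_pos hu.1 _) (Real.rpow_pos_of_pos (by linarith [hu.2]) _)
    have : (hfun y u) ^ p < t ^ p :=
      Real.rpow_lt_rpow (hfun_pos hy hu).le hlt hp
    rw [htpow] at this
    have : Ba * (hfun y u) ^ p - Bb < 0 := by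
      rw [lt_div_iff₀ hBa] at this; nlinarith
    have eD : D u = wker y a u * (Ba * (hfun y u) ^ p - Bb) := by
      simp only [hD_def]; rw [hW u hu]; ring
    rw [eD]
    exact mul_neg_of_pos_of_neg hwa this
  have hsign_gt : ∀ u ∈ Ioo (0:ℝ) 1, t < hfun y u → 0 < D u := by
    intro u hu hlt
    have hwa : 0 < wker y a u :=
      mul_pos (Real.rpow_pos_of_pos hu.1 _) (Real.rpow_pos_of_pos (by linarith [hu.2]) _)
    have : t ^ p < (hfun y u) ^ p := Real.rpow_lt_rpow ht.le hlt hp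
    rw [htpow] at this
    have : 0 < Ba * (hfun y u) ^ p - Bb := by
      rw [div_lt_iff₀ hBa] at this; nlinarith
    have eD : D u = wker y a u * (Ba * (hfun y u) ^ p - Bb) := by
      simp only [hD_def]; rw [hW u hu]; ring
    rw [eD]
    exact mul_pos hwa this
  have hsign_eq : ∀ u ∈ Ioo (0:ℝ) 1, hfun y u = t → D u = 0 := by
    intro u hu heq
    have eD : D u = wker y a u * (Ba * (hfun y u) ^ p - Bb) := by
      simp only [hD_def]; rw [hW u hu]; ring
    rw [eD, heq, htpow]
    rw [mul_div_cancel₀ _ hBa.ne']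
    ring
  -- t is below the max of hfun
  have htlt : t < hfun y m := by
    by_contra hle
    push_neg at hle
    have hDle : ∀ u ∈ Ioo (0:ℝ) 1, D u ≤ 0 := by
      intro u hu
      rcases lt_trichotomy u m with h | h | h
      · have : hfun y u < hfun y m :=
          hsm ⟨hu.1.le, h.le⟩ ⟨hm0.le, le_rfl⟩ h
        exact (hsign_lt u hu (lt_of_lt_of_le this hle)).le
      · rcases lt_or_eq_of_le hle with h2 | h2
        · exact (hsign_lt u hu (h ▸ h2)).le
        · exact le_of_eq (hsign_eq u hu (by rw [h]; exact h2))
      · have : hfun y u < hfun y m :=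
          hsa ⟨le_rfl, hm1.le⟩ ⟨h.le, hu.2.le⟩ h
        exact (hsign_lt u hu (lt_of_lt_of_le this hle)).le
    have hneg : (∫ u in (0:ℝ)..1, D u) < 0 := by
      refine integral_neg_of_Ioo hDi hDle
        (by linarith : (0:ℝ) ≤ (2*m+1)/3) (by linarith : (2*m+1)/3 < (m+2)/3)
        (by linarith : (m+2)/3 ≤ 1) ?_
      intro u hu
      have hum : m < u := by
        rcases hu with ⟨h1, h2⟩; linarith
      have hu1 : u < 1 := by rcases hu with ⟨h1, h2⟩; linarith
      have : hfun y u < hfun y m :=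
        hsa ⟨le_rfl, hm1.le⟩ ⟨hum.le, hu1.le⟩ hum
      exact hsign_lt u ⟨lt_trans hm0 hum, hu1⟩ (lt_of_lt_of_le this hle)
    rw [hintD] at hneg
    exact lt_irrefl 0 hneg
  -- crossing points
  obtain ⟨u1, hu1m, hu1⟩ : ∃ u1 ∈ Ioo (0:ℝ) m, hfun y u1 = t := by
    have := intermediate_value_Ioo hm0.le ((hfun_cont hy).continuousOn (s := Icc 0 m))
    have ht' : t ∈ Ioo (hfun y 0) (hfun y m) := by
      rw [hfun_zero hy]; exact ⟨ht, htlt⟩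
    obtain ⟨u1, h1, h2⟩ := this ht'
    exact ⟨u1, h1, h2⟩
  obtain ⟨u2, hu2m, hu2⟩ : ∃ u2 ∈ Ioo m 1, hfun y u2 = t := by
    have := intermediate_value_Ioo' hm1.le ((hfun_cont hy).continuousOn (s := Icc m 1))
    have ht' : t ∈ Ioo (hfun y 1) (hfun y m) := by
      rw [hfun_one hy]; exact ⟨ht, htlt⟩
    obtain ⟨u2, h1, h2⟩ := this ht'
    exact ⟨u2, h1, h2⟩
  have hu1_01 : u1 ∈ Ioo (0:ℝ) 1 := ⟨hu1m.1, lt_trans hu1m.2 hm1⟩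
  have hu2_01 : u2 ∈ Ioo (0:ℝ) 1 := ⟨lt_trans hm0 hu2m.1, hu2m.2⟩
  have hu12 : u1 < u2 := lt_trans hu1m.2 hu2m.1
  have h21 : (0:ℝ) < u2 - u1 := by linarith
  -- sign of D on the three regions
  have hneg_left : ∀ u ∈ Ioo (0:ℝ) u1, D u < 0 := by
    intro u hu
    have hu01 : u ∈ Ioo (0:ℝ) 1 := ⟨hu.1, lt_trans hu.2 hu1_01.2⟩
    have : hfun y u < hfun y u1 :=
      hsm ⟨hu.1.le, by linarith [hu1m.2, hu.2]⟩
        ⟨hu1m.1.le, hu1m.2.le⟩ hu.2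
    exact hsign_lt u hu01 (hu1 ▸ this)
  have hpos_mid : ∀ u ∈ Ioo u1 u2, 0 < D u := by
    intro u hu
    have hu01 : u ∈ Ioo (0:ℝ) 1 := ⟨lt_trans hu1_01.1 hu.1, lt_trans hu.2 hu2_01.2⟩
    rcases le_or_gt u m with h | h
    · have : hfun y u1 < hfun y u :=
        hsm ⟨hu1m.1.le, hu1m.2.le⟩ ⟨hu01.1.le, h⟩ hu.1
      exact hsign_gt u hu01 (hu1 ▸ this)
    · have : hfun y u2 < hfun y u :=
        hsa ⟨h.le, hu01.2.le⟩ ⟨hu2m.1.le, hu2m.2.le⟩ hu.2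
      exact hsign_gt u hu01 (hu2 ▸ this)
  have hneg_right : ∀ u ∈ Ioo u2 (1:ℝ), D u < 0 := by
    intro u hu
    have hu01 : u ∈ Ioo (0:ℝ) 1 := ⟨lt_trans hu2_01.1 hu.1, hu.2⟩
    have : hfun y u < hfun y u2 :=
      hsa ⟨hu2m.1.le, hu2m.2.le⟩
        ⟨by linarith [hu2m.1, hu.1], hu.2.le⟩ hu.1
    exact hsign_lt u hu01 (hu2 ▸ this)
  have hD_u1 : D u1 = 0 := hsign_eq u1 hu1_01 hu1
  have hD_u2 : D u2 = 0 := hsign_eq u2 hu2_01 hu2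
  -- the chord line through (u1, phi u1) and (u2, phi u2)
  set s0 : ℝ := (phi r u2 - phi r u1) / (u2 - u1) with hs0_def
  set lin : ℝ → ℝ := fun u => phi r u1 + s0 * (u - u1) with hlin_def
  have hlin_mul : ∀ u : ℝ, lin u * (u2 - u1) = phi r u1 * (u2 - u) + phi r u2 * (u - u1) := by
    intro u
    have hs : s0 * (u2 - u1) = phi r u2 - phi r u1 := div_mul_cancel₀ _ h21.ne'
    simp only [hlin_def]
    linear_combination (u - u1) * hs
  have hlin_cont : Continuous lin := by
    rw [hlin_def]
    exact continuous_const.add (continuous_const.mul (continuous_id.sub continuous_const))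
  have hlinD : (∫ u in (0:ℝ)..1, lin u * D u) = 0 := by
    have e : (fun u : ℝ => lin u * D u) =
        fun u => (phi r u1 - s0 * u1) * D u + s0 * (u * D u) := by
      funext u; simp only [hlin_def]; ring
    have iuD : IntervalIntegrable (fun u : ℝ => u * D u) volume 0 1 :=
      hDi.continuousOn_mul continuousOn_id
    rw [e, intervalIntegral.integral_add (hDi.const_mul _) (iuD.const_mul _),
      intervalIntegral.integral_const_mul, intervalIntegral.integral_const_mul,
      hintD, hintuD]
    ring
  -- the function q
  set q : ℝ → ℝ := fun u => (phi r u - lin u) * D u with hq_def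
  have hq_int : IntervalIntegrable q volume 0 1 :=
    hDi.continuousOn_mul ((phi_continuous hr0).sub hlin_cont).continuousOn
  have hphiD_int : IntervalIntegrable (fun u : ℝ => phi r u * D u) volume 0 1 :=
    hDi.continuousOn_mul (phi_continuous hr0).continuousOn
  have hlinD_int : IntervalIntegrable (fun u : ℝ => lin u * D u) volume 0 1 :=
    hDi.continuousOn_mul hlin_cont.continuousOn
  have hphiq : (∫ u in (0:ℝ)..1, phi r u * D u) = ∫ u in (0:ℝ)..1, q u := by
    have e : (fun u : ℝ => q u) =
        fun u => phi r u * D u - lin u * D u := by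
      funext u; simp only [hq_def]; ring
    rw [e, intervalIntegral.integral_sub hphiD_int hlinD_int, hlinD, sub_zero]
  -- pointwise nonpositivity of q
  have hq_nonpos : ∀ u ∈ Ioo (0:ℝ) 1, q u ≤ 0 := by
    intro u hu
    simp only [hq_def]
    rcases lt_trichotomy u u1 with h | h | h
    · have hch := chord_ineq hr0 h hu12
      have hlm := hlin_mul u
      have hle : lin u ≤ phi r u := by
        have : lin u * (u2 - u1) ≤ phi r u * (u2 - u1) := by linarith
        exact le_of_mul_le_mul_right this h21
      exact mul_nonpos_of_nonneg_of_nonpos (by linarith)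
        (hneg_left u ⟨hu.1, h⟩).le
    · rw [h, hD_u1, mul_zero]
    · rcases lt_trichotomy u u2 with h2 | h2 | h2
      · have hch := chord_ineq hr0 h h2
        have hlm := hlin_mul u
        have hle : phi r u ≤ lin u := by
          have : phi r u * (u2 - u1) ≤ lin u * (u2 - u1) := by linarith
          exact le_of_mul_le_mul_right this h21
        exact mul_nonpos_of_nonpos_of_nonneg (by linarith)
          (hpos_mid u ⟨h, h2⟩).le
      · rw [h2, hD_u2, mul_zero]
      · have hch := chord_ineq hr0 hu12 h2
        have hlm := hlin_mul u
        have hle : lin u ≤ phi r u := by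
          have : lin u * (u2 - u1) ≤ phi r u * (u2 - u1) := by linarith
          exact le_of_mul_le_mul_right this h21
        exact mul_nonpos_of_nonneg_of_nonpos (by linarith)
          (hneg_right u ⟨h2, hu.2⟩).le
  -- translation to the stated integrals
  have hIb := phi_integral hy hr0 hr1 hb
  have hIa := phi_integral hy hr0 hr1 ha
  have ipwb : IntervalIntegrable (fun u : ℝ => phi r u * wker y b u) volume 0 1 :=
    (wker_integrable hy hb).continuousOn_mul (phi_continuous hr0).continuousOn
  have ipwa : IntervalIntegrable (fun u : ℝ => phi r u * wker y a u) volume 0 1 :=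
    (wker_integrable hy ha).continuousOn_mul (phi_continuous hr0).continuousOn
  have hdiff : Ba * (∫ u in (0:ℝ)..r, (1 - u / r) * u ^ (b - 1) * (1 - u) ^ (y * b - 1)) -
      Bb * (∫ u in (0:ℝ)..r, (1 - u / r) * u ^ (a - 1) * (1 - u) ^ (y * a - 1)) =
      ∫ u in (0:ℝ)..1, phi r u * D u := by
    rw [hIb, hIa]
    have e : (fun u : ℝ => phi r u * D u) =
        fun u => Ba * (phi r u * wker y b u) - Bb * (phi r u * wker y a u) := by
      funext u; simp only [hD_def]; ring
    rw [e, intervalIntegral.integral_sub (ipwb.const_mul _) (ipwa.const_mul _),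
      intervalIntegral.integral_const_mul, intervalIntegral.integral_const_mul]
  have hphi_eq : ∀ u : ℝ, u ≤ r → phi r u = 1 - u / r := by
    intro u h
    exact max_eq_left (by linarith [(div_le_one hr0).mpr h])
  have hphi_zero : ∀ u : ℝ, r ≤ u → phi r u = 0 := by
    intro u h
    exact max_eq_right (by linarith [(one_le_div hr0).mpr h])
  constructor
  · have hq_le : (∫ u in (0:ℝ)..1, q u) ≤ 0 :=
      integral_nonpos_of_Ioo (by norm_num) hq_nonpos
    rw [hphiq] at hdiff
    linarith
  · intro hrlt
    -- strict negativity of ∫ q on a suitable subinterval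
    have hq_neg : (∫ u in (0:ℝ)..1, q u) < 0 := by
      rcases le_or_gt r u1 with hru1 | hru1
      · -- r ≤ u1 : strict on (r/3, 2r/3)
        refine integral_neg_of_Ioo hq_int hq_nonpos
          (by positivity : (0:ℝ) ≤ r/3) (by linarith : r/3 < 2*r/3)
          (by linarith : 2*r/3 ≤ 1) ?_
        intro u hu
        have hu0 : 0 < u := lt_of_le_of_lt (by positivity) hu.1
        have hur : u < r := by rcases hu with ⟨h1, h2⟩; linarith
        have hz1 : phi r u1 = 0 := hphi_zero u1 hru1
        have hz2 : phi r u2 = 0 := hphi_zero u2 (by linarith)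
        have hlu : lin u = 0 := by
          have := hlin_mul u
          rw [hz1, hz2] at this
          have h0 : lin u * (u2 - u1) = 0 := by linarith
          exact (mul_eq_zero.mp h0).resolve_right h21.ne'
        have hpu : 0 < phi r u := by
          rw [hphi_eq u hur.le]
          have : u / r < 1 := (div_lt_one hr0).mpr hur
          linarith
        simp only [hq_def, hlu, sub_zero]
        exact mul_neg_of_pos_of_neg hpu (hneg_left u ⟨hu0, by linarith⟩)
      · rcases le_or_gt u2 r with hru2 | hru2
        · -- u2 ≤ r < 1 : strict on ((2r+1)/3, (r+2)/3)
          refine integral_neg_of_Ioo hq_int hq_nonpos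
            (by linarith : (0:ℝ) ≤ (2*r+1)/3) (by linarith : (2*r+1)/3 < (r+2)/3)
            (by linarith : (r+2)/3 ≤ 1) ?_
          intro u hu
          have hur : r < u := by rcases hu with ⟨h1, h2⟩; linarith
          have hu1' : u < 1 := by rcases hu with ⟨h1, h2⟩; linarith
          have hz : phi r u = 0 := hphi_zero u hur.le
          have he1 : phi r u1 = 1 - u1 / r := hphi_eq u1 (by linarith)
          have he2 : phi r u2 = 1 - u2 / r := hphi_eq u2 hru2
          have e : (1 - u1/r) * (u2 - u) + (1 - u2/r) * (u - u1) =
              (1 - u/r) * (u2 - u1) := by field_simp; ring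
          have hlu : lin u = 1 - u / r := by
            have hlm := hlin_mul u
            rw [he1, he2] at hlm
            have : lin u * (u2 - u1) = (1 - u/r) * (u2 - u1) := by linarith
            exact mul_right_cancel₀ h21.ne' this
          have hneg : lin u < 0 := by
            rw [hlu]
            have : 1 < u / r := (one_lt_div hr0).mpr hur
            linarith
          simp only [hq_def, hz, zero_sub]
          have hDu : D u < 0 := hneg_right u ⟨by linarith, hu1'⟩
          exact mul_neg_of_pos_of_neg (by linarith) hDu
        · -- u1 < r < u2 : strict on ((2u1+r)/3, (u1+2r)/3)
          have hu1r : u1 < r := hru1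
          refine integral_neg_of_Ioo hq_int hq_nonpos
            (by linarith [hu1_01.1] : (0:ℝ) ≤ (2*u1+r)/3)
            (by linarith : (2*u1+r)/3 < (u1+2*r)/3)
            (by linarith [hu1_01.2] : (u1+2*r)/3 ≤ 1) ?_
          intro u hu
          have hu1u : u1 < u := by rcases hu with ⟨h1, h2⟩; linarith
          have hur : u < r := by rcases hu with ⟨h1, h2⟩; linarith
          have he0 : phi r u = 1 - u / r := hphi_eq u hur.le
          have he1 : phi r u1 = 1 - u1 / r := hphi_eq u1 hu1r.le
          have hz2 : phi r u2 = 0 := hphi_zero u2 hru2.le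
          have e : (1 - u1/r) * (u2 - u) + (1 - u2/r) * (u - u1) =
              (1 - u/r) * (u2 - u1) := by field_simp; ring
          have hltl : phi r u - lin u < 0 := by
            have hlm := hlin_mul u
            rw [he1, hz2] at hlm
            have hfac : (1 - u2/r) * (u - u1) < 0 := by
              refine mul_neg_of_neg_of_pos ?_ (by linarith)
              have h1 : 1 < u2 / r := (one_lt_div hr0).mpr hru2
              linarith
            have h3 : phi r u * (u2 - u1) < lin u * (u2 - u1) := by
              rw [he0]; linarith
            have := lt_of_mul_lt_mul_right h3 (by linarith : (0:ℝ) ≤ u2 - u1)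
            linarith
          simp only [hq_def]
          exact mul_neg_of_neg_of_pos hltl (hpos_mid u ⟨hu1u, by linarith⟩)
    rw [hphiq] at hdiff
    linarith

theorem g_antitone (y r : ℝ) (hy : 0 < y) (hr0 : 0 < r) (hr1 : r ≤ 1) :
    AntitoneOn (g y r) (Set.Ioi 0) ∧
    (r < 1 → StrictAntiOn (g y r) (Set.Ioi 0)) := by
  have hmain : ∀ a ∈ Set.Ioi (0:ℝ), ∀ b ∈ Set.Ioi (0:ℝ), a < b →
      g y r b ≤ g y r a ∧ (r < 1 → g y r b < g y r a) := by
    intro a ha b hb hab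
    have ha' : 0 < a := ha
    have hb' : 0 < b := hb
    obtain ⟨h1, h2⟩ := key_ineq hy hr0 hr1 ha' hab
    have hBa : 0 < betaFn a (y * a) := betaFn_pos ha' (mul_pos hy ha')
    have hBb : 0 < betaFn b (y * b) := betaFn_pos hb' (mul_pos hy hb')
    constructor
    · rw [g, g, one_div_mul_eq_div, one_div_mul_eq_div, div_le_div_iff₀ hBb hBa]
      linear_combination h1
    · intro hrlt
      rw [g, g, one_div_mul_eq_div, one_div_mul_eq_div, div_lt_div_iff₀ hBb hBa]
      linear_combination h2 hrlt
  constructor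
  · intro a ha b hb hab
    rcases eq_or_lt_of_le hab with h | h
    · rw [h]
    · exact (hmain a ha b hb h).1
  · intro hrlt a ha b hb hab
    exact (hmain a ha b hb hab).2 hrlt
end
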